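/- arXiv:2509.02429 — 4 statements merged into one kernel-verified Lean document; each statement's English description precedes it below -/
import Mathlib

section
/- The two-qubit multi-controlled circuit equals its efficient singly-controlled implementation: with E₀₀ = |0⟩⟨0| and E₃₃ = |3⟩⟨3| the 4×4 matrix units (identifying Fin 2 × Fin 2 with Fin 4 via ℓ = 2ℓ₀ + ℓ₁), one has (E₃₃ ⊗ S₊ + (I₄ − E₃₃) ⊗ I_N) · (E₀₀ ⊗ S₋ + (I₄ − E₀₀) ⊗ I_N) = (P₁ ⊗ I₂ ⊗ S₊ + P₀ ⊗ I₂ ⊗ I_N) · (I₂ ⊗ P₀ ⊗ S₋ + I₂ ⊗ P₁ ⊗ I_N). -/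
open Matrix Kronecker

noncomputable section

/-- Cyclic shift matrix `S₊`: `(S₊)_{jk} = 1` iff `j ≡ k+1 (mod N)`. -/
def Sp (N : ℕ) [NeZero N] : Matrix (Fin N) (Fin N) ℂ :=
  Matrix.of fun j k => if j = k + 1 then 1 else 0

/-- Cyclic shift matrix `S₋ = S₊ᵀ`. -/
def Sm (N : ℕ) [NeZero N] : Matrix (Fin N) (Fin N) ℂ := (Sp N)ᵀ

def P0 : Matrix (Fin 2) (Fin 2) ℂ := !![1, 0; 0, 0]
def P1 : Matrix (Fin 2) (Fin 2) ℂ := !![0, 0; 0, 1]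

/-- The 4×4 matrix unit `|ℓ⟩⟨ℓ|`, with `ℓ = 2ℓ₀ + ℓ₁` encoded as the pair `(ℓ₀, ℓ₁)`. -/
def Ell (l0 l1 : Fin 2) : Matrix (Fin 2 × Fin 2) (Fin 2 × Fin 2) ℂ :=
  Matrix.single (l0, l1) (l0, l1) 1

lemma SpSm (N : ℕ) [NeZero N] : Sp N * Sm N = 1 := by
  ext j k
  simp only [Sp, Sm, Matrix.mul_apply, Matrix.transpose_apply, Matrix.of_apply,
    ite_mul, one_mul, zero_mul]
  have h : ∀ x : Fin N, (j = x + 1) = (x = j - 1) := by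
    intro x; rw [eq_iff_iff, eq_comm, ← eq_sub_iff_add_eq]
  simp_rw [h]
  rw [Finset.sum_ite_eq' Finset.univ (j - 1)]
  simp [sub_add_cancel, Matrix.one_apply, eq_comm]

lemma sub11 : (1 : Matrix (Fin 2 × Fin 2) (Fin 2 × Fin 2) ℂ) - Ell 1 1
    = P0 ⊗ₖ P0 + P0 ⊗ₖ P1 + P1 ⊗ₖ P0 := by
  ext ⟨a,b⟩ ⟨c,d⟩
  fin_cases a <;> fin_cases b <;> fin_cases c <;> fin_cases d <;>
    simp [Ell, P0, P1, Matrix.single, Matrix.kroneckerMap_apply,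
      Matrix.one_apply, Prod.ext_iff]

lemma sub00 : (1 : Matrix (Fin 2 × Fin 2) (Fin 2 × Fin 2) ℂ) - Ell 0 0
    = P0 ⊗ₖ P1 + P1 ⊗ₖ P0 + P1 ⊗ₖ P1 := by
  ext ⟨a,b⟩ ⟨c,d⟩
  fin_cases a <;> fin_cases b <;> fin_cases c <;> fin_cases d <;>
    simp [Ell, P0, P1, Matrix.single, Matrix.kroneckerMap_apply,
      Matrix.one_apply, Prod.ext_iff]

lemma e11 : Ell 1 1 = P1 ⊗ₖ P1 := by
  ext ⟨a,b⟩ ⟨c,d⟩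
  fin_cases a <;> fin_cases b <;> fin_cases c <;> fin_cases d <;>
    simp [Ell, P1, Matrix.single, Matrix.kroneckerMap_apply, Prod.ext_iff]

lemma e00 : Ell 0 0 = P0 ⊗ₖ P0 := by
  ext ⟨a,b⟩ ⟨c,d⟩
  fin_cases a <;> fin_cases b <;> fin_cases c <;> fin_cases d <;>
    simp [Ell, P0, Matrix.single, Matrix.kroneckerMap_apply, Prod.ext_iff]

lemma p00 : P0 * P0 = P0 := by
  ext i j; fin_cases i <;> fin_cases j <;> simp [P0, Matrix.mul_apply, Fin.sum_univ_two]
lemma p11 : P1 * P1 = P1 := by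
  ext i j; fin_cases i <;> fin_cases j <;> simp [P1, Matrix.mul_apply, Fin.sum_univ_two]
lemma p01 : P0 * P1 = 0 := by
  ext i j; fin_cases i <;> fin_cases j <;> simp [P0, P1, Matrix.mul_apply, Fin.sum_univ_two]
lemma p10 : P1 * P0 = 0 := by
  ext i j; fin_cases i <;> fin_cases j <;> simp [P0, P1, Matrix.mul_apply, Fin.sum_univ_two]
lemma p0p1 : P0 + P1 = 1 := by
  ext i j; fin_cases i <;> fin_cases j <;> simp [P0, P1, Matrix.one_apply]

theorem stmt_1 (n : ℕ) (hn : 1 ≤ n) (N : ℕ) (hN : N = 2 ^ n) [NeZero N] :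
    (Ell 1 1 ⊗ₖ Sp N
        + ((1 : Matrix (Fin 2 × Fin 2) (Fin 2 × Fin 2) ℂ) - Ell 1 1) ⊗ₖ (1 : Matrix (Fin N) (Fin N) ℂ))
      * (Ell 0 0 ⊗ₖ Sm N
        + ((1 : Matrix (Fin 2 × Fin 2) (Fin 2 × Fin 2) ℂ) - Ell 0 0) ⊗ₖ (1 : Matrix (Fin N) (Fin N) ℂ))
    = (P1 ⊗ₖ (1 : Matrix (Fin 2) (Fin 2) ℂ) ⊗ₖ Sp N
        + P0 ⊗ₖ (1 : Matrix (Fin 2) (Fin 2) ℂ) ⊗ₖ (1 : Matrix (Fin N) (Fin N) ℂ))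
      * ((1 : Matrix (Fin 2) (Fin 2) ℂ) ⊗ₖ P0 ⊗ₖ Sm N
        + (1 : Matrix (Fin 2) (Fin 2) ℂ) ⊗ₖ P1 ⊗ₖ (1 : Matrix (Fin N) (Fin N) ℂ)) := by
  rw [sub11, sub00, e11, e00, ← p0p1]
  simp only [Matrix.add_kronecker, Matrix.kronecker_add, add_mul, mul_add,
    ← Matrix.mul_kronecker_mul, p00, p11, p01, p10, SpSm,
    Matrix.one_mul, Matrix.mul_one, Matrix.zero_mul, Matrix.mul_zero,
    Matrix.zero_kronecker, Matrix.kronecker_zero, add_zero, zero_add]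
  abel
end
end

section
/- Let D ≥ 1, d̂ = ⌈log₂ D⌉, D̂ = 2^{d̂}. For d < D let E_d ∈ Matrix (Fin D̂) (Fin D̂) ℂ be the matrix unit |d⟩⟨d|, and let S₊^{(d)}, S₋^{(d)} be the matrices on ℂ^{N^D} (indexed by j : Fin D → Fin N) with entries (S₊^{(d)})_{jk} = (S₊)_{j(d),k(d)} · ∏_{e ≠ d} [j(e) = k(e)], similarly for S₋^{(d)}. Set V_d = (P₁ ⊗ I₂ ⊗ S₊^{(d)} + P₀ ⊗ I₂ ⊗ I) · (I₂ ⊗ P₀ ⊗ S₋^{(d)} + I₂ ⊗ P₁ ⊗ I) on ℂ² ⊗ ℂ² ⊗ ℂ^{N^D}, and G_d = E_d ⊗ V_d + (I_{D̂} − E_d) ⊗ I_{4N^D}. Let H_{d̂} denote the d̂-fold Kronecker power of H (a D̂×D̂ matrix), and define U = (H_{d̂} ⊗ H ⊗ H ⊗ I_{N^D}) · (G_{D−1} ⋯ G_1 G_0) · (H_{d̂} ⊗ (Z·H) ⊗ (Z·H) ⊗ I_{N^D}), indexed by Fin D̂ × Fin 2 × Fin 2 × (Fin D → Fin N). Then U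 is a block encoding of L̃_D with sub-normalization factor α_D = D/D̂: for all j, k : Fin D → Fin N, U((0,0,0,j),(0,0,0,k)) = (D/D̂)·(L̃_D)_{jk} = ((h²/(4D̂))·L_D)_{jk}. -/
open Matrix Kronecker

noncomputable section

def Hg : Matrix (Fin 2) (Fin 2) ℂ := ((Real.sqrt 2 : ℝ) : ℂ)⁻¹ • !![1, 1; 1, -1]
def Zg : Matrix (Fin 2) (Fin 2) ℂ := !![1, 0; 0, -1]

/-- The discrete 1D periodic Laplacian `L₁ = (1/h²)(S₊ + S₋ − 2·I_N)`. -/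
def L1 (N : ℕ) [NeZero N] (h : ℝ) : Matrix (Fin N) (Fin N) ℂ :=
  ((1 / h ^ 2 : ℝ) : ℂ) • (Sp N + Sm N - 2 • (1 : Matrix (Fin N) (Fin N) ℂ))

/-- The discrete `D`-dimensional periodic Laplacian, the Kronecker sum of `D` copies of `L₁`. -/
def LD (N D : ℕ) [NeZero N] (h : ℝ) :
    Matrix (Fin D → Fin N) (Fin D → Fin N) ℂ :=
  Matrix.of fun j k => ∑ d : Fin D,
    L1 N h (j d) (k d) * ∏ e ∈ Finset.univ.erase d, (if j e = k e then (1 : ℂ) else 0)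

/-- The normalized discrete `D`-dimensional periodic Laplacian `L̃_D = (h²/(4D))·L_D`. -/
def LtD (N D : ℕ) [NeZero N] (h : ℝ) :
    Matrix (Fin D → Fin N) (Fin D → Fin N) ℂ :=
  ((h ^ 2 / (4 * D) : ℝ) : ℂ) • LD N D h

/-- Shift `S₊` acting in direction `d` on `ℂ^{N^D}`:
`(S₊^{(d)})_{jk} = (S₊)_{j(d),k(d)} · ∏_{e ≠ d} [j(e) = k(e)]`. -/
def SpD (N D : ℕ) [NeZero N] (d : Fin D) :
    Matrix (Fin D → Fin N) (Fin D → Fin N) ℂ :=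
  Matrix.of fun j k =>
    Sp N (j d) (k d) * ∏ e ∈ Finset.univ.erase d, (if j e = k e then (1 : ℂ) else 0)

/-- Shift `S₋` acting in direction `d` on `ℂ^{N^D}`. -/
def SmD (N D : ℕ) [NeZero N] (d : Fin D) :
    Matrix (Fin D → Fin N) (Fin D → Fin N) ℂ :=
  Matrix.of fun j k =>
    Sm N (j d) (k d) * ∏ e ∈ Finset.univ.erase d, (if j e = k e then (1 : ℂ) else 0)

/-- The core two-ancilla-qubit circuit `V_d` acting on `ℂ² ⊗ ℂ² ⊗ ℂ^{N^D}`. -/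
def Vd (N D : ℕ) [NeZero N] (d : Fin D) :
    Matrix ((Fin 2 × Fin 2) × (Fin D → Fin N)) ((Fin 2 × Fin 2) × (Fin D → Fin N)) ℂ :=
  (P1 ⊗ₖ (1 : Matrix (Fin 2) (Fin 2) ℂ) ⊗ₖ SpD N D d
      + P0 ⊗ₖ (1 : Matrix (Fin 2) (Fin 2) ℂ)
          ⊗ₖ (1 : Matrix (Fin D → Fin N) (Fin D → Fin N) ℂ))
    * ((1 : Matrix (Fin 2) (Fin 2) ℂ) ⊗ₖ P0 ⊗ₖ SmD N D d
      + (1 : Matrix (Fin 2) (Fin 2) ℂ) ⊗ₖ P1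
          ⊗ₖ (1 : Matrix (Fin D → Fin N) (Fin D → Fin N) ℂ))

/-- The matrix unit `E_d = |d⟩⟨d|` on `ℂ^{D̂}`, `D̂ = 2^⌈log₂ D⌉`, with `d < D ≤ D̂`. -/
def Ed (D : ℕ) (d : Fin D) :
    Matrix (Fin (2 ^ Nat.clog 2 D)) (Fin (2 ^ Nat.clog 2 D)) ℂ :=
  Matrix.single (Fin.castLE (Nat.le_pow_clog one_lt_two D) d)
    (Fin.castLE (Nat.le_pow_clog one_lt_two D) d) 1

/-- The `|d⟩`-controlled gate `G_d = E_d ⊗ V_d + (I_{D̂} − E_d) ⊗ I`. -/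
def Gd (N D : ℕ) [NeZero N] (d : Fin D) :
    Matrix (Fin (2 ^ Nat.clog 2 D) × ((Fin 2 × Fin 2) × (Fin D → Fin N)))
      (Fin (2 ^ Nat.clog 2 D) × ((Fin 2 × Fin 2) × (Fin D → Fin N))) ℂ :=
  Ed D d ⊗ₖ Vd N D d
    + ((1 : Matrix (Fin (2 ^ Nat.clog 2 D)) (Fin (2 ^ Nat.clog 2 D)) ℂ) - Ed D d)
        ⊗ₖ (1 : Matrix ((Fin 2 × Fin 2) × (Fin D → Fin N)) ((Fin 2 × Fin 2) × (Fin D → Fin N)) ℂ)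

/-- The `d`-fold Kronecker power of the Hadamard gate, as a `2^d × 2^d` matrix
(first factor most significant). -/
def hadPow : (d : ℕ) → Matrix (Fin (2 ^ d)) (Fin (2 ^ d)) ℂ
  | 0 => 1
  | d + 1 =>
    Matrix.reindex (finProdFinEquiv.trans (finCongr (by ring)))
      (finProdFinEquiv.trans (finCongr (by ring))) (Hg ⊗ₖ hadPow d)

/-- The full block-encoding circuit
`U = (H_{d̂} ⊗ H ⊗ H ⊗ I) · (G_{D−1} ⋯ G_1 G_0) · (H_{d̂} ⊗ (Z·H) ⊗ (Z·H) ⊗ I)`. -/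
def Ubig (N D : ℕ) [NeZero N] :
    Matrix (Fin (2 ^ Nat.clog 2 D) × ((Fin 2 × Fin 2) × (Fin D → Fin N)))
      (Fin (2 ^ Nat.clog 2 D) × ((Fin 2 × Fin 2) × (Fin D → Fin N))) ℂ :=
  (hadPow (Nat.clog 2 D)
      ⊗ₖ (Hg ⊗ₖ Hg ⊗ₖ (1 : Matrix (Fin D → Fin N) (Fin D → Fin N) ℂ)))
    * ((List.finRange D).reverse.map (Gd N D)).prod
    * (hadPow (Nat.clog 2 D)
      ⊗ₖ ((Zg * Hg) ⊗ₖ (Zg * Hg) ⊗ₖ (1 : Matrix (Fin D → Fin N) (Fin D → Fin N) ℂ)))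

-- ===== auxiliary development =====
namespace StmtAux

lemma Sp_mul_Sm (N : ℕ) [NeZero N] : Sp N * Sm N = 1 := by
  ext j k
  simp only [Matrix.mul_apply, Sp, Sm, Matrix.transpose_apply, Matrix.of_apply,
    ite_mul, one_mul, zero_mul]
  have h1 : ∀ x : Fin N, (j = x + 1) ↔ (x = j - 1) := by
    intro x; constructor <;> intro hx <;> subst hx <;> simp
  simp only [h1]
  rw [Finset.sum_ite_eq' Finset.univ (j-1) (fun x => if k = x + 1 then (1:ℂ) else 0)]
  simp only [Finset.mem_univ, if_true]
  have h2 : (k = j - 1 + 1) ↔ (j = k) := by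
    constructor <;> intro hx <;> subst hx <;> simp
  simp [h2, Matrix.one_apply, eq_comm]

lemma shift_cond {N D : ℕ} [NeZero N] (d : Fin D) (j k : Fin D → Fin N) :
    (j d = k d + 1 ∧ ∀ e ∈ Finset.univ.erase d, j e = k e) ↔
      j = Function.update k d (k d + 1) := by
  constructor
  · rintro ⟨h1, h2⟩
    funext e
    rcases eq_or_ne e d with rfl | he
    · simpa using h1
    · simpa [Function.update_apply, he] using h2 e (by simp [he])
  · rintro rfl
    refine ⟨by simp, fun e he => ?_⟩
    simp only [Finset.mem_erase, Finset.mem_univ, and_true] at he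
    simp [Function.update_apply, he]

lemma SpD_apply {N D : ℕ} [NeZero N] (d : Fin D) (j k : Fin D → Fin N) :
    SpD N D d j k = if j = Function.update k d (k d + 1) then 1 else 0 := by
  simp only [SpD, Matrix.of_apply, Sp, Finset.prod_boole, ite_mul, one_mul, zero_mul,
    ← shift_cond]
  by_cases h1 : j d = k d + 1 <;> by_cases h2 : ∀ e ∈ Finset.univ.erase d, j e = k e <;>
    simp [h1, h2]

lemma SmD_apply {N D : ℕ} [NeZero N] (d : Fin D) (j k : Fin D → Fin N) :
    SmD N D d j k = if k = Function.update j d (j d + 1) then 1 else 0 := by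
  simp only [SmD, Matrix.of_apply, Sm, Matrix.transpose_apply, Sp, Finset.prod_boole,
    ite_mul, one_mul, zero_mul]
  have hc : (k = Function.update j d (j d + 1)) ↔
      (k d = j d + 1 ∧ ∀ e ∈ Finset.univ.erase d, j e = k e) := by
    rw [← shift_cond d k j]
    constructor <;> rintro ⟨h1, h2⟩ <;> exact ⟨h1, fun e he => (h2 e he).symm⟩
  by_cases h1 : k d = j d + 1 <;> by_cases h2 : ∀ e ∈ Finset.univ.erase d, j e = k e <;>
    simp [h1, h2, hc]

lemma SpD_mul_SmD {N D : ℕ} [NeZero N] (d : Fin D) : SpD N D d * SmD N D d = 1 := by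
  ext j k
  simp only [Matrix.mul_apply, SpD_apply, SmD_apply]
  have h1 : ∀ m : Fin D → Fin N,
      (j = Function.update m d (m d + 1)) ↔ (m = Function.update j d (j d - 1)) := by
    intro m
    constructor
    · rintro rfl; funext e
      rcases eq_or_ne e d with rfl | he <;> simp [Function.update_apply, *]
    · rintro rfl
      funext e
      rcases eq_or_ne e d with rfl | he <;> simp [Function.update_apply, *]
  simp only [h1, ite_mul, one_mul, zero_mul]
  rw [Finset.sum_ite_eq' Finset.univ _
    (fun m => if k = Function.update m d (m d + 1) then (1:ℂ) else 0)]
  have h2 : Function.update (Function.update j d (j d - 1)) d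
      ((Function.update j d (j d - 1)) d + 1) = j := by
    simp [Function.update_idem]
  simp [h2, Matrix.one_apply, eq_comm]

def BD {α β : Type*} [DecidableEq α] (f : α → Matrix β β ℂ) : Matrix (α × β) (α × β) ℂ :=
  Matrix.of fun p q => if p.1 = q.1 then f p.1 p.2 q.2 else 0

lemma BD_one {α β : Type*} [DecidableEq α] [DecidableEq β] :
    BD (fun _ : α => (1 : Matrix β β ℂ)) = 1 := by
  ext ⟨a, x⟩ ⟨b, y⟩
  simp [BD, Matrix.one_apply, Prod.ext_iff, ite_and]

lemma BD_mul {α β : Type*} [DecidableEq α] [Fintype α] [Fintype β]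
    (f g : α → Matrix β β ℂ) : BD f * BD g = BD (fun a => f a * g a) := by
  ext ⟨a, x⟩ ⟨b, y⟩
  simp only [BD, Matrix.mul_apply, Matrix.of_apply, Fintype.sum_prod_type]
  rw [Finset.sum_comm]
  by_cases hab : a = b
  · subst hab
    simp only [if_pos rfl, Matrix.mul_apply]
    refine Finset.sum_congr rfl fun z _ => ?_
    rw [Finset.sum_eq_single a (fun c _ hc => by simp [Ne.symm hc]) (by simp)]
    simp
  · rw [if_neg hab]
    refine Finset.sum_eq_zero fun z _ => ?_
    refine Finset.sum_eq_zero fun c _ => ?_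
    by_cases h1 : a = c <;> by_cases h2 : c = b <;> simp_all

lemma equiv_symm_zero (d : ℕ) (h : 2 * 2 ^ d = 2 ^ (d+1)) :
    (finProdFinEquiv.trans (finCongr h)).symm (0 : Fin (2^(d+1)))
      = ((0 : Fin 2), (0 : Fin (2^d))) := by
  rw [Equiv.symm_apply_eq]
  ext
  simp [finProdFinEquiv]

noncomputable abbrev cc : ℂ := ((Real.sqrt 2 : ℝ) : ℂ)⁻¹

lemma Hg_zero_row (b : Fin 2) : Hg 0 b = cc := by fin_cases b <;> simp [Hg]
lemma Hg_zero_col (b : Fin 2) : Hg b 0 = cc := by fin_cases b <;> simp [Hg]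

lemma cc_sq : cc ^ 2 = (2 : ℂ)⁻¹ := by
  rw [StmtAux.cc, inv_pow]
  norm_num [← Complex.ofReal_pow, Real.sq_sqrt]

lemma hadPow_zero_row (d : ℕ) (a : Fin (2^d)) : hadPow d 0 a = cc ^ d := by
  induction d with
  | zero =>
    have : a = 0 := by ext; omega
    simp [hadPow, this, Matrix.one_apply]
  | succ d ih =>
    rw [hadPow, Matrix.reindex_apply, Matrix.submatrix_apply, equiv_symm_zero,
      Matrix.kroneckerMap_apply]
    rw [Hg_zero_row, ih]
    ring

lemma hadPow_zero_col (d : ℕ) (a : Fin (2^d)) : hadPow d a 0 = cc ^ d := by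
  induction d with
  | zero =>
    have : a = 0 := by ext; omega
    simp [hadPow, this, Matrix.one_apply]
  | succ d ih =>
    rw [hadPow, Matrix.reindex_apply, Matrix.submatrix_apply, equiv_symm_zero,
      Matrix.kroneckerMap_apply]
    rw [Hg_zero_col, ih]
    ring

lemma ZH_col (b : Fin 2) : (Zg * Hg) b 0 = if b = 0 then cc else -cc := by
  fin_cases b <;> simp [Zg, Hg, Matrix.mul_apply, Fin.sum_univ_two]

end StmtAux
namespace StmtAux

def cst (D : ℕ) : Fin D → Fin (2 ^ Nat.clog 2 D) :=
  Fin.castLE (Nat.le_pow_clog one_lt_two D)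

lemma cst_inj {D : ℕ} {d e : Fin D} : cst D d = cst D e ↔ d = e := by
  constructor
  · intro h; exact Fin.castLE_injective _ h
  · rintro rfl; rfl

lemma Gd_eq (N D : ℕ) [NeZero N] (d : Fin D) :
    Gd N D d = BD (fun a => if a = cst D d then Vd N D d else 1) := by
  ext ⟨a, x⟩ ⟨b, y⟩
  simp only [Gd, Ed, BD, Matrix.add_apply, Matrix.sub_apply, Matrix.kroneckerMap_apply,
    Matrix.single, Matrix.of_apply, Matrix.one_apply, cst]
  by_cases hab : a = b
  · subst hab
    by_cases ha : a = Fin.castLE (Nat.le_pow_clog one_lt_two D) d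
    · simp [← ha]
    · have h' : Fin.castLE (Nat.le_pow_clog one_lt_two D) d ≠ a := fun hh => ha hh.symm
      simp [h', ha, Matrix.one_apply]
  · by_cases ha : a = Fin.castLE (Nat.le_pow_clog one_lt_two D) d
    · have hb : Fin.castLE (Nat.le_pow_clog one_lt_two D) d ≠ b := by
        rintro rfl; exact hab ha
      simp [← ha, hb, hab]
    · have h' : Fin.castLE (Nat.le_pow_clog one_lt_two D) d ≠ a := fun hh => ha hh.symm
      simp [h', hab, ha]

end StmtAux
namespace StmtAux

lemma prod_map_one {N D : ℕ} [NeZero N] (a : Fin (2 ^ Nat.clog 2 D)) :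
    ∀ l : List (Fin D), (∀ e ∈ l, a ≠ cst D e) →
      (l.map (fun e => if a = cst D e then Vd N D e else 1)).prod = 1 := by
  intro l
  induction l with
  | nil => simp
  | cons e t ih =>
    intro hl
    simp only [List.map_cons, List.prod_cons]
    rw [if_neg (hl e (by simp)), ih (fun x hx => hl x (by simp [hx])), one_mul]

lemma prod_map_Vd {N D : ℕ} [NeZero N] (d : Fin D) :
    ∀ l : List (Fin D), l.Nodup → d ∈ l →
      (l.map (fun e => if cst D d = cst D e then Vd N D e else 1)).prod = Vd N D d := by
  intro l
  induction l with
  | nil => simp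
  | cons e t ih =>
    intro hnd hm
    simp only [List.map_cons, List.prod_cons]
    rcases List.mem_cons.mp hm with rfl | hmt
    · rw [if_pos rfl, prod_map_one _ t
        (fun x hx hc => (List.nodup_cons.mp hnd).1 (by rw [cst_inj.mp hc]; exact hx)), mul_one]
    · have hde : d ≠ e := by rintro rfl; exact (List.nodup_cons.mp hnd).1 hmt
      rw [if_neg (fun hc => hde (cst_inj.mp hc)), one_mul,
        ih (List.nodup_cons.mp hnd).2 hmt]

lemma prod_Gd_eq (N D : ℕ) [NeZero N] :
    ∀ l : List (Fin D), (l.map (Gd N D)).prod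
      = BD (fun a => (l.map (fun e => if a = cst D e then Vd N D e else 1)).prod) := by
  intro l
  induction l with
  | nil => simp [BD_one]
  | cons e t ih =>
    simp only [List.map_cons, List.prod_cons, ih, Gd_eq, BD_mul]

/-- key: the middle product is block diagonal with explicit blocks -/
lemma prod_Gd_finRange (N D : ℕ) [NeZero N] :
    (((List.finRange D).reverse).map (Gd N D)).prod
      = BD (fun a => 1 + ∑ d : Fin D,
          if a = cst D d then Vd N D d - 1 else 0) := by
  rw [prod_Gd_eq]
  refine congrArg BD (funext fun a => ?_)
  by_cases ha : ∃ d : Fin D, a = cst D d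
  · obtain ⟨d, rfl⟩ := ha
    rw [prod_map_Vd d _ (by simp [List.nodup_reverse, List.nodup_finRange]) (by simp)]
    have : ∀ e : Fin D, (cst D d = cst D e) ↔ (e = d) := by
      intro e; rw [cst_inj]; exact eq_comm
    simp only [this]
    rw [Finset.sum_ite_eq' Finset.univ d (fun e => Vd N D e - 1)]
    simp
  · push_neg at ha
    rw [prod_map_one a _ (fun e _ => ha e)]
    have : ∀ e : Fin D, (a = cst D e) ↔ False := fun e => iff_false_intro (ha e)
    simp [this]

end StmtAux
namespace StmtAux

lemma Vd_eq (N D : ℕ) [NeZero N] (d : Fin D) :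
    Vd N D d
      = P1 ⊗ₖ P0 ⊗ₖ (1 : Matrix (Fin D → Fin N) (Fin D → Fin N) ℂ)
        + P1 ⊗ₖ P1 ⊗ₖ SpD N D d
        + P0 ⊗ₖ P0 ⊗ₖ SmD N D d
        + P0 ⊗ₖ P1 ⊗ₖ (1 : Matrix (Fin D → Fin N) (Fin D → Fin N) ℂ) := by
  rw [Vd, add_mul, mul_add, mul_add]
  simp only [← Matrix.mul_kronecker_mul, Matrix.one_mul, Matrix.mul_one, SpD_mul_SmD]
  abel

/-- signed sum functional -/
noncomputable def Tf {N D : ℕ} [NeZero N] (j k : Fin D → Fin N)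
    (M : Matrix ((Fin 2 × Fin 2) × (Fin D → Fin N)) ((Fin 2 × Fin 2) × (Fin D → Fin N)) ℂ) :
    ℂ :=
  ∑ b' : Fin 2, ∑ c' : Fin 2, ∑ b : Fin 2, ∑ c : Fin 2,
    (Zg * Hg) b' 0 * ((Zg * Hg) c' 0 * M ((b, c), j) ((b', c'), k))

lemma Tf_one {N D : ℕ} [NeZero N] (j k : Fin D → Fin N) : Tf j k 1 = 0 := by
  simp only [Tf, Matrix.one_apply, Prod.mk.injEq]
  simp [Fin.sum_univ_two, ZH_col, Prod.ext_iff]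
  split <;> ring

lemma Tf_Vd {N D : ℕ} [NeZero N] (j k : Fin D → Fin N) (d : Fin D) :
    Tf j k (Vd N D d)
      = cc ^ 2 * (SpD N D d j k + SmD N D d j k
          - 2 * (1 : Matrix (Fin D → Fin N) (Fin D → Fin N) ℂ) j k) := by
  rw [Vd_eq]
  simp only [Tf, Matrix.add_apply, Matrix.kroneckerMap_apply]
  simp [Fin.sum_univ_two, ZH_col, P0, P1, Matrix.one_apply]
  split <;> ring

end StmtAux
namespace StmtAux

lemma entry_formula (N D : ℕ) [NeZero N]
    (W : Fin (2 ^ Nat.clog 2 D) →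
      Matrix ((Fin 2 × Fin 2) × (Fin D → Fin N)) ((Fin 2 × Fin 2) × (Fin D → Fin N)) ℂ)
    (j k : Fin D → Fin N) :
    ((hadPow (Nat.clog 2 D)
        ⊗ₖ (Hg ⊗ₖ Hg ⊗ₖ (1 : Matrix (Fin D → Fin N) (Fin D → Fin N) ℂ)))
      * BD W
      * (hadPow (Nat.clog 2 D)
        ⊗ₖ ((Zg * Hg) ⊗ₖ (Zg * Hg) ⊗ₖ (1 : Matrix (Fin D → Fin N) (Fin D → Fin N) ℂ))))
        ((0, ((0, 0), j))) ((0, ((0, 0), k)))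
    = cc ^ Nat.clog 2 D * cc ^ Nat.clog 2 D * (cc * cc) * ∑ a, Tf j k (W a) := by
  rw [Matrix.mul_apply]
  simp only [Matrix.mul_apply, Matrix.kroneckerMap_apply, BD, Matrix.of_apply]
  simp only [Fintype.sum_prod_type]
  simp only [hadPow_zero_row, hadPow_zero_col, Hg_zero_row, Matrix.one_apply,
    mul_ite, mul_one, mul_zero, ite_mul, zero_mul,
    Finset.sum_ite_eq, Finset.sum_ite_eq', Finset.mem_univ, if_true,
    Finset.sum_ite_irrel, Finset.sum_const_zero]
  simp only [← Matrix.mul_apply]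
  rw [Finset.mul_sum]
  refine Finset.sum_congr rfl fun a _ => ?_
  simp only [Tf, Finset.mul_sum, Finset.sum_mul]
  refine Finset.sum_congr rfl fun b' _ => ?_
  refine Finset.sum_congr rfl fun c' _ => ?_
  refine Finset.sum_congr rfl fun b _ => ?_
  refine Finset.sum_congr rfl fun c _ => ?_
  ring

end StmtAux
namespace StmtAux

lemma Tf_add {N D : ℕ} [NeZero N] (j k : Fin D → Fin N) (M M' :
    Matrix ((Fin 2 × Fin 2) × (Fin D → Fin N)) ((Fin 2 × Fin 2) × (Fin D → Fin N)) ℂ) :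
    Tf j k (M + M') = Tf j k M + Tf j k M' := by
  simp [Tf, Matrix.add_apply, mul_add, Finset.sum_add_distrib]

lemma Tf_sum {N D : ℕ} [NeZero N] (j k : Fin D → Fin N) {ι : Type*} (s : Finset ι)
    (M : ι → Matrix ((Fin 2 × Fin 2) × (Fin D → Fin N)) ((Fin 2 × Fin 2) × (Fin D → Fin N)) ℂ) :
    Tf j k (∑ d ∈ s, M d) = ∑ d ∈ s, Tf j k (M d) := by
  classical
  induction s using Finset.induction with
  | empty => simp [Tf]
  | insert x s hx ih => simp [Finset.sum_insert hx, Tf_add, ih]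

lemma Tf_ite {N D : ℕ} [NeZero N] (j k : Fin D → Fin N) (P : Prop) [Decidable P] (M M' :
    Matrix ((Fin 2 × Fin 2) × (Fin D → Fin N)) ((Fin 2 × Fin 2) × (Fin D → Fin N)) ℂ) :
    Tf j k (if P then M else M') = if P then Tf j k M else Tf j k M' := by
  split <;> rfl

lemma Tf_zero {N D : ℕ} [NeZero N] (j k : Fin D → Fin N) : Tf j k 0 = 0 := by
  simp [Tf]

lemma Tf_sub {N D : ℕ} [NeZero N] (j k : Fin D → Fin N) (M M' :
    Matrix ((Fin 2 × Fin 2) × (Fin D → Fin N)) ((Fin 2 × Fin 2) × (Fin D → Fin N)) ℂ) :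
    Tf j k (M - M') = Tf j k M - Tf j k M' := by
  simp [Tf, Matrix.sub_apply, mul_sub, Finset.sum_sub_distrib]

lemma one_split {N D : ℕ} [NeZero N] (d : Fin D) (j k : Fin D → Fin N) :
    (1 : Matrix (Fin D → Fin N) (Fin D → Fin N) ℂ) j k
      = (1 : Matrix (Fin N) (Fin N) ℂ) (j d) (k d)
          * ∏ e ∈ Finset.univ.erase d, (if j e = k e then (1 : ℂ) else 0) := by
  simp only [Matrix.one_apply, Finset.prod_boole, ite_mul, one_mul, zero_mul]
  have hiff : (j = k) ↔ (j d = k d ∧ ∀ e ∈ Finset.univ.erase d, j e = k e) := by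
    constructor
    · rintro rfl; exact ⟨rfl, fun _ _ => rfl⟩
    · rintro ⟨h1, h2⟩
      funext e
      rcases eq_or_ne e d with rfl | he
      · exact h1
      · exact h2 e (by simp [he])
  by_cases h1 : j d = k d <;> by_cases h2 : ∀ e ∈ Finset.univ.erase d, j e = k e <;>
    simp [hiff, h1, h2]

end StmtAux

namespace StmtAux
lemma L1_apply (N : ℕ) [NeZero N] (h : ℝ) (x y : Fin N) :
    L1 N h x y = ((1 / h ^ 2 : ℝ) : ℂ)
      * (Sp N x y + Sm N x y - 2 * (1 : Matrix (Fin N) (Fin N) ℂ) x y) := by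
  rw [L1, Matrix.smul_apply, Matrix.sub_apply, Matrix.add_apply, Matrix.smul_apply,
    nsmul_eq_mul, smul_eq_mul]
  norm_num
end StmtAux
open StmtAux in
theorem stmt_4 (n : ℕ) (hn : 1 ≤ n) (N : ℕ) (hN : N = 2 ^ n) [NeZero N]
    (h : ℝ) (hh : h = 1 / N) (D : ℕ) (hD : 1 ≤ D) :
    ∀ j k : Fin D → Fin N,
      Ubig N D ((0, ((0, 0), j))) ((0, ((0, 0), k)))
        = ((D : ℂ) / ((2 ^ Nat.clog 2 D : ℕ) : ℂ)) * LtD N D h j k := by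
  intro j k
  have hNR : (N : ℝ) ≠ 0 := Nat.cast_ne_zero.mpr (NeZero.ne N)
  have hhR : h ≠ 0 := by rw [hh]; positivity
  have hhC : (h : ℂ) ≠ 0 := Complex.ofReal_ne_zero.mpr hhR
  have hDC : (D : ℂ) ≠ 0 := Nat.cast_ne_zero.mpr (by omega)
  rw [Ubig, prod_Gd_finRange, entry_formula]
  have h2D : ∀ a, Tf j k (1 + ∑ d : Fin D, if a = cst D d then Vd N D d - 1 else 0)
      = ∑ d : Fin D, if a = cst D d then Tf j k (Vd N D d) else 0 := by
    intro a
    rw [Tf_add, Tf_one, Tf_sum, zero_add]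
    refine Finset.sum_congr rfl fun d _ => ?_
    rw [Tf_ite, Tf_sub, Tf_one, Tf_zero]
    simp
  simp only [h2D]
  rw [Finset.sum_comm]
  simp only [Finset.sum_ite_eq', Finset.mem_univ, if_true, Tf_Vd]
  rw [LtD, Matrix.smul_apply, smul_eq_mul]
  simp only [LD, Matrix.of_apply, L1_apply]
  simp only [Finset.mul_sum]
  refine Finset.sum_congr rfl fun d _ => ?_
  rw [show SpD N D d j k = Sp N (j d) (k d)
      * ∏ e ∈ Finset.univ.erase d, (if j e = k e then (1:ℂ) else 0) from rfl,
    show SmD N D d j k = Sm N (j d) (k d)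
      * ∏ e ∈ Finset.univ.erase d, (if j e = k e then (1:ℂ) else 0) from rfl,
    one_split d j k]
  have hcd : cc ^ Nat.clog 2 D * cc ^ Nat.clog 2 D = ((2:ℂ) ^ Nat.clog 2 D)⁻¹ := by
    rw [← pow_add, ← two_mul, pow_mul, cc_sq, inv_pow]
  have hcc : cc * cc = (2:ℂ)⁻¹ := by rw [← sq, cc_sq]
  rw [hcd, hcc, cc_sq]
  have hcast : ((2 ^ Nat.clog 2 D : ℕ) : ℂ) = (2:ℂ) ^ Nat.clog 2 D := by push_cast; ring
  rw [hcast]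
  push_cast
  have h2 : ((2:ℂ) ^ Nat.clog 2 D) ≠ 0 := pow_ne_zero _ two_ne_zero
  field_simp
  ring
end
end

section
/- The spectral norm of the discrete 1D periodic Laplacian equals 4/h²: the operator norm of the linear map on EuclideanSpace ℂ (Fin N) induced by the matrix L₁ = (1/h²)(S₊ + S₋ − 2·I_N) (i.e., ‖Matrix.toEuclideanLin L₁‖) equals 4/h² = 4N². -/
open Matrix

noncomputable section

lemma Sp_mulVec (N : ℕ) [NeZero N] (x : Fin N → ℂ) (j : Fin N) : (Sp N *ᵥ x) j = x (j - 1) := by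
  simp only [Sp, mulVec, dotProduct, of_apply, ite_mul, one_mul, zero_mul]
  have h1 : ∀ k : Fin N, (j = k + 1) ↔ (k = j - 1) := by
    intro k
    constructor
    · intro hk; rw [hk]; exact (add_sub_cancel_right k 1).symm
    · intro hk; rw [hk]; exact (sub_add_cancel j 1).symm
  simp only [h1, Finset.sum_ite_eq', Finset.mem_univ, if_true]

lemma Sm_mulVec (N : ℕ) [NeZero N] (x : Fin N → ℂ) (j : Fin N) : (Sm N *ᵥ x) j = x (j + 1) := by
  simp only [Sm, Sp, mulVec, dotProduct, transpose_apply, of_apply, ite_mul, one_mul, zero_mul,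
    Finset.sum_ite_eq', Finset.mem_univ, if_true]

lemma L1_mulVec (N : ℕ) [NeZero N] (h : ℝ) (y : Fin N → ℂ) (j : Fin N) :
    (L1 N h *ᵥ y) j = ((1 / h ^ 2 : ℝ) : ℂ) * (y (j - 1) + y (j + 1) - 2 * y j) := by
  simp only [L1, smul_mulVec, add_mulVec, sub_mulVec, Pi.smul_apply, Pi.add_apply,
    Pi.sub_apply, smul_eq_mul, Sp_mulVec, Sm_mulVec, two_smul, one_mulVec]
  ring_nf

/-- shifting coordinates preserves the euclidean norm -/
lemma norm_shift (N : ℕ) [NeZero N] (x : EuclideanSpace ℂ (Fin N)) (c : Fin N) :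
    ‖((WithLp.equiv 2 (Fin N → ℂ)).symm fun j => x (j + c))‖ = ‖x‖ := by
  rw [EuclideanSpace.norm_eq, EuclideanSpace.norm_eq]
  congr 1
  exact Fintype.sum_equiv (Equiv.addRight c) _ _ (fun j => by simp)

lemma neg_one_pow_mod (N a : ℕ) (hN : 2 ∣ N) : ((-1 : ℂ)) ^ (a % N) = (-1) ^ a := by
  obtain ⟨m, hm⟩ := hN
  have hE : Even N := ⟨m, by omega⟩
  conv_rhs => rw [← Nat.mod_add_div a N]
  rw [pow_add, pow_mul, hE.neg_one_pow, one_pow, mul_one]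

theorem stmt_8 (n : ℕ) (hn : 1 ≤ n) (N : ℕ) (hN : N = 2 ^ n) [NeZero N]
    (h : ℝ) (hh : h = 1 / N) :
    ‖LinearMap.toContinuousLinearMap (Matrix.toEuclideanLin (L1 N h))‖ = 4 / h ^ 2 ∧
    (4 / h ^ 2 : ℝ) = 4 * (N : ℝ) ^ 2 := by
  have hN2 : 2 ∣ N := hN ▸ dvd_pow_self 2 (by omega)
  have hN1 : 1 < N := by
    rw [hN]; exact Nat.one_lt_two_pow_iff.mpr (by omega)
  have hNR : (0 : ℝ) < N := by positivity
  have hhpos : 0 < h := by rw [hh]; positivity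
  have hh2 : 0 < h ^ 2 := by positivity
  set T := LinearMap.toContinuousLinearMap (Matrix.toEuclideanLin (L1 N h)) with hT
  -- the action of T
  have key : ∀ x : EuclideanSpace ℂ (Fin N),
      T x = ((1 / h ^ 2 : ℝ) : ℂ) •
        (((WithLp.equiv 2 (Fin N → ℂ)).symm fun j => x (j - 1)) +
         ((WithLp.equiv 2 (Fin N → ℂ)).symm fun j => x (j + 1)) - (2 : ℂ) • x) := by
    intro x
    apply (WithLp.equiv 2 (Fin N → ℂ)).injective
    funext j
    have hTx : T x = Matrix.toEuclideanLin (L1 N h) x := by simp [hT]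
    rw [hTx, Matrix.toEuclideanLin_apply]
    simp only [Equiv.apply_symm_apply, WithLp.equiv_apply, WithLp.ofLp_toLp]
    rw [L1_mulVec]
    simp only [WithLp.equiv_apply, WithLp.equiv_symm_apply, WithLp.ofLp_toLp, WithLp.ofLp_add,
      WithLp.ofLp_sub, WithLp.ofLp_smul, Pi.smul_apply, Pi.add_apply, Pi.sub_apply, PiLp.smul_apply,
      PiLp.add_apply, PiLp.sub_apply, smul_eq_mul]
  -- upper bound
  have upper : ‖T‖ ≤ 4 / h ^ 2 := by
    apply ContinuousLinearMap.opNorm_le_bound _ (by positivity)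
    intro x
    rw [key x, norm_smul]
    have e1 : ‖((WithLp.equiv 2 (Fin N → ℂ)).symm fun j => x (j - 1))‖ = ‖x‖ := by
      have : (fun j : Fin N => x (j - 1)) = fun j => x (j + (-1)) := by
        funext j; rw [sub_eq_add_neg]
      rw [this]; exact norm_shift N x (-1)
    have e2 : ‖((WithLp.equiv 2 (Fin N → ℂ)).symm fun j => x (j + 1))‖ = ‖x‖ :=
      norm_shift N x 1
    have e3 : ‖(2 : ℂ) • x‖ = 2 * ‖x‖ := by rw [norm_smul]; norm_num
    calc ‖((1 / h ^ 2 : ℝ) : ℂ)‖ * ‖_ + _ - (2 : ℂ) • x‖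
        ≤ (1 / h ^ 2) * (‖x‖ + ‖x‖ + 2 * ‖x‖) := by
          apply mul_le_mul
          · rw [Complex.norm_real, Real.norm_eq_abs, abs_of_pos (by positivity)]
          · refine le_trans (norm_sub_le _ _) ?_
            rw [e3]
            gcongr
            refine le_trans (norm_add_le _ _) ?_
            rw [e1, e2]
          · positivity
          · positivity
      _ = 4 / h ^ 2 * ‖x‖ := by ring
  -- the alternating eigenvector
  set v : EuclideanSpace ℂ (Fin N) :=
    (WithLp.equiv 2 (Fin N → ℂ)).symm (fun j => (-1 : ℂ) ^ (j : ℕ)) with hv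
  have hvval : ∀ j : Fin N, v j = (-1 : ℂ) ^ (j : ℕ) := fun j => rfl
  have hvadd : ∀ j : Fin N, v (j + 1) = - v j := by
    intro j
    rw [hvval, hvval]
    have h1 : ((j + 1 : Fin N) : ℕ) = (j.val + ((1 : Fin N) : ℕ)) % N := Fin.val_add j 1
    have h2 : ((1 : Fin N) : ℕ) = 1 := by
      rw [Fin.val_one']; exact Nat.mod_eq_of_lt hN1
    rw [h1, h2, neg_one_pow_mod N _ hN2, pow_succ]
    ring
  have hvsub : ∀ j : Fin N, v (j - 1) = - v j := by
    intro j
    have := hvadd (j - 1)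
    rw [sub_add_cancel] at this
    rw [this, neg_neg]
  -- T v = (-4/h²) • v
  have hTv : T v = (((1 / h ^ 2 : ℝ) : ℂ) * (-4)) • v := by
    rw [key v]
    rw [← smul_smul]
    congr 1
    apply (WithLp.equiv 2 (Fin N → ℂ)).injective
    funext j
    simp only [WithLp.equiv_apply, WithLp.equiv_symm_apply, WithLp.ofLp_toLp, WithLp.ofLp_add,
      WithLp.ofLp_sub, WithLp.ofLp_smul, Pi.smul_apply, Pi.add_apply, Pi.sub_apply, PiLp.smul_apply,
      PiLp.add_apply, PiLp.sub_apply, smul_eq_mul]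
    rw [hvsub j, hvadd j]
    ring
  have hvne : v ≠ 0 := by
    intro h0
    have : v 0 = 0 := by rw [h0]; rfl
    rw [hvval 0] at this
    simp at this
  have hvpos : 0 < ‖v‖ := norm_pos_iff.mpr hvne
  have lower : 4 / h ^ 2 ≤ ‖T‖ := by
    have hle := T.le_opNorm v
    rw [hTv, norm_smul] at hle
    have hnorm : ‖((1 / h ^ 2 : ℝ) : ℂ) * (-4)‖ = 4 / h ^ 2 := by
      rw [norm_mul, Complex.norm_real, Real.norm_eq_abs, abs_of_pos (by positivity)]
      norm_num; ring
    rw [hnorm] at hle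
    exact le_of_mul_le_mul_right hle hvpos
  refine ⟨le_antisymm upper lower, ?_⟩
  rw [hh]
  field_simp
end
end

section
/- Consistency of the finite difference discretization of the D-dimensional Laplacian: let v : (Fin D → ℝ) → ℝ be four times continuously differentiable (ContDiff ℝ 4 v) and 1-periodic in each coordinate, i.e. v(x + Pi.single d 1) = v(x) for all x and all d < D. For d < D and x : Fin D → ℝ, write ∂_d^k v(x) = iteratedDeriv k (fun t => v(x + t • Pi.single d 1)) 0 for the k-th partial derivative of v in direction d. Assume M_d ≥ 0 satisfies |∂_d^4 v(x)| ≤ M_d for all x. Define the grid vector 𝐯 : (Fin D → Fin N) → ℝ by 𝐯_j = v(fun d => j(d)·h), and let L_D^ℝ be the real matrix with the same entries as L_D. Then for every j : Fin D → Fin N, |(L_D^ℝ.mulVec 𝐯)_j − Σ_{d<D} ∂_d^2 v(fun d => j(d)·h)| ≤ (h²/12)·Σ_{d<D} M_d. -/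
open Matrix

noncomputable section

/-- Cyclic shift matrix `S₊` (real entries): `(S₊)_{jk} = 1` iff `j ≡ k+1 (mod N)`. -/
def SpR (N : ℕ) [NeZero N] : Matrix (Fin N) (Fin N) ℝ :=
  Matrix.of fun j k => if j = k + 1 then 1 else 0

/-- Cyclic shift matrix `S₋ = S₊ᵀ` (real entries). -/
def SmR (N : ℕ) [NeZero N] : Matrix (Fin N) (Fin N) ℝ := (SpR N)ᵀ

/-- The discrete 1D periodic Laplacian `L₁ = (1/h²)(S₊ + S₋ − 2·I_N)` (real entries). -/
def L1R (N : ℕ) [NeZero N] (h : ℝ) : Matrix (Fin N) (Fin N) ℝ :=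
  (1 / h ^ 2 : ℝ) • (SpR N + SmR N - 2 • (1 : Matrix (Fin N) (Fin N) ℝ))

/-- The discrete `D`-dimensional periodic Laplacian (real entries), the Kronecker sum of
`D` copies of `L₁`: `(L_D)_{jk} = Σ_{d<D} (L₁)_{j(d),k(d)} · ∏_{e ≠ d} [j(e) = k(e)]`. -/
def LDR (N D : ℕ) [NeZero N] (h : ℝ) :
    Matrix (Fin D → Fin N) (Fin D → Fin N) ℝ :=
  Matrix.of fun j k => ∑ d : Fin D,
    L1R N h (j d) (k d) * ∏ e ∈ Finset.univ.erase d, (if j e = k e then (1 : ℝ) else 0)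

/- ### Auxiliary lemmas -/

lemma idw_eq {g : ℝ → ℝ} (hg : ContDiff ℝ 4 g) {s : Set ℝ} (hs : UniqueDiffOn ℝ s)
    (k : ℕ) (hk : k ≤ 4) : Set.EqOn (iteratedDerivWithin k g s) (iteratedDeriv k g) s := by
  induction k with
  | zero => intro x hx; simp
  | succ k ih =>
    intro x hx
    rw [iteratedDerivWithin_succ,
      derivWithin_congr (ih (le_of_lt (Nat.lt_of_succ_le hk))) (ih (le_of_lt (Nat.lt_of_succ_le hk)) hx),
      ((hg.differentiable_iteratedDeriv k (by exact_mod_cast Nat.lt_of_succ_le hk)) x).derivWithin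
        (hs.uniqueDiffWithinAt hx), iteratedDeriv_succ]

lemma taylor4 {g : ℝ → ℝ} (hg : ContDiff ℝ 4 g) {M : ℝ}
    (hM4 : ∀ t, |iteratedDeriv 4 g t| ≤ M) {h : ℝ} (hh : 0 < h) :
    |g h - (g 0 + h * iteratedDeriv 1 g 0 + h ^ 2 / 2 * iteratedDeriv 2 g 0
        + h ^ 3 / 6 * iteratedDeriv 3 g 0)| ≤ M * h ^ 4 / 24 := by
  have hs : UniqueDiffOn ℝ (Set.Icc (0:ℝ) h) := uniqueDiffOn_Icc hh
  have hcd : ContDiffOn ℝ 3 g (Set.Icc 0 h) := (hg.of_le (by norm_num)).contDiffOn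
  have hdiff : DifferentiableOn ℝ (iteratedDerivWithin 3 g (Set.Icc 0 h)) (Set.Ioo 0 h) := by
    apply DifferentiableOn.congr
      ((hg.differentiable_iteratedDeriv 3 (by norm_num)).differentiableOn (s := Set.Ioo 0 h))
    exact fun x hx => idw_eq hg hs 3 (by norm_num) (Set.Ioo_subset_Icc_self hx)
  obtain ⟨c, hc, hT⟩ := taylor_mean_remainder_lagrange (n := 3) hh.ne (by rw [Set.uIcc_of_le hh.le]; exact hcd)
    (by rw [Set.uIcc_of_le hh.le, Set.uIoo_of_le hh.le]; exact hdiff)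
  rw [Set.uIcc_of_le hh.le] at hT
  rw [Set.uIoo_of_le hh.le] at hc
  rw [taylor_within_apply] at hT
  have h0 : (0:ℝ) ∈ Set.Icc (0:ℝ) h := ⟨le_refl 0, hh.le⟩
  have e4 : iteratedDerivWithin 4 g (Set.Icc 0 h) c = iteratedDeriv 4 g c :=
    idw_eq hg hs 4 le_rfl (Set.Ioo_subset_Icc_self hc)
  have expand : ∑ k ∈ Finset.range (3+1), (((k.factorial : ℕ) : ℝ)⁻¹ * (h - 0) ^ k) • iteratedDerivWithin k g (Set.Icc 0 h) 0
      = g 0 + h * iteratedDeriv 1 g 0 + h ^ 2 / 2 * iteratedDeriv 2 g 0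
        + h ^ 3 / 6 * iteratedDeriv 3 g 0 := by
    rw [Finset.sum_range_succ, Finset.sum_range_succ, Finset.sum_range_succ, Finset.sum_range_one]
    rw [idw_eq hg hs 0 (by norm_num) h0, idw_eq hg hs 1 (by norm_num) h0,
      idw_eq hg hs 2 (by norm_num) h0, idw_eq hg hs 3 (by norm_num) h0]
    norm_num [Nat.factorial]
    ring
  rw [expand] at hT
  rw [hT, e4]
  have := hM4 c
  rw [abs_div, abs_mul]
  calc |iteratedDeriv 4 g c| * |((h:ℝ) - 0) ^ (3+1)| / |(((3+1).factorial : ℕ) : ℝ)|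
      ≤ M * h ^ 4 / 24 := by
        rw [sub_zero, abs_pow, abs_of_pos hh]
        norm_num [Nat.factorial]
        gcongr

lemma central {g : ℝ → ℝ} (hg : ContDiff ℝ 4 g) {M : ℝ}
    (hM4 : ∀ t, |iteratedDeriv 4 g t| ≤ M) {h : ℝ} (hh : 0 < h) :
    |(g h + g (-h) - 2 * g 0) / h ^ 2 - iteratedDeriv 2 g 0| ≤ h ^ 2 * M / 12 := by
  have hgn : ContDiff ℝ 4 (fun t => g (-t)) := hg.comp contDiff_neg
  have hMn : ∀ t, |iteratedDeriv 4 (fun t => g (-t)) t| ≤ M := by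
    intro t; rw [iteratedDeriv_comp_neg]; norm_num; exact hM4 (-t)
  have A := taylor4 hg hM4 hh
  have B := taylor4 hgn hMn hh
  have e1 : iteratedDeriv 1 (fun t => g (-t)) 0 = -iteratedDeriv 1 g 0 := by
    rw [iteratedDeriv_comp_neg]; norm_num
  have e2 : iteratedDeriv 2 (fun t => g (-t)) 0 = iteratedDeriv 2 g 0 := by
    rw [iteratedDeriv_comp_neg]; norm_num
  have e3 : iteratedDeriv 3 (fun t => g (-t)) 0 = -iteratedDeriv 3 g 0 := by
    rw [iteratedDeriv_comp_neg]; norm_num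
  rw [e1, e2, e3] at B
  simp only [neg_zero] at B
  set a0 := g 0
  set a1 := iteratedDeriv 1 g 0
  set a2 := iteratedDeriv 2 g 0
  set a3 := iteratedDeriv 3 g 0
  set E1 := g h - (a0 + h * a1 + h ^ 2 / 2 * a2 + h ^ 3 / 6 * a3) with hE1
  set E2 := g (-h) - (a0 + h * -a1 + h ^ 2 / 2 * a2 + h ^ 3 / 6 * -a3) with hE2
  have key : (g h + g (-h) - 2 * g 0) / h ^ 2 - a2 = (E1 + E2) / h ^ 2 := by
    field_simp [hE1, hE2]
    ring
  rw [key, abs_div, abs_of_pos (pow_pos hh 2)]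
  rw [div_le_iff₀ (pow_pos hh 2)]
  calc |E1 + E2| ≤ |E1| + |E2| := abs_add_le _ _
    _ ≤ M * h ^ 4 / 24 + M * h ^ 4 / 24 := add_le_add A B
    _ = h ^ 2 * M / 12 * h ^ 2 := by ring

lemma row_sum (N : ℕ) [NeZero N] (h : ℝ) (a : Fin N) (u : Fin N → ℝ) :
    ∑ m : Fin N, L1R N h a m * u m = (1 / h ^ 2) * (u (a - 1) + u (a + 1) - 2 * u a) := by
  simp only [L1R, SpR, SmR, Matrix.smul_apply, Matrix.sub_apply, Matrix.add_apply,
    Matrix.transpose_apply, Matrix.of_apply, Matrix.one_apply, smul_eq_mul, mul_assoc]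
  rw [← Finset.mul_sum]
  congr 1
  have c1 : ∀ m : Fin N, ((if a = m + 1 then (1:ℝ) else 0)) = (if a - 1 = m then 1 else 0) := by
    intro m; exact if_congr (by rw [sub_eq_iff_eq_add]) rfl rfl
  simp only [sub_mul, add_mul, ite_mul, one_mul, zero_mul, c1]
  rw [Finset.sum_sub_distrib, Finset.sum_add_distrib]
  simp [Finset.sum_ite_eq, Finset.sum_ite_eq', mul_comm]

lemma collapse {N D : ℕ} [NeZero N] (d : Fin D) (j : Fin D → Fin N)
    (c : Fin N → ℝ) (w : (Fin D → Fin N) → ℝ) :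
    ∑ k : Fin D → Fin N, (if Function.update j d (k d) = k then c (k d) * w k else 0)
      = ∑ m : Fin N, c m * w (Function.update j d m) := by
  classical
  rw [← Finset.sum_filter]
  apply Finset.sum_nbij' (fun k => k d) (fun m => Function.update j d m)
  · intro a _; exact Finset.mem_univ _
  · intro m _
    simp only [Finset.mem_filter, Finset.mem_univ, true_and]
    rw [Function.update_self]
  · intro k hk
    exact (Finset.mem_filter.mp hk).2
  · intro m _
    exact Function.update_self d m j
  · intro k hk
    rw [(Finset.mem_filter.mp hk).2]

lemma mulVec_LDR {N D : ℕ} [NeZero N] (h : ℝ) (w : (Fin D → Fin N) → ℝ) (j : Fin D → Fin N) :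
    (LDR N D h).mulVec w j = ∑ d : Fin D,
      (1 / h ^ 2) * (w (Function.update j d (j d - 1)) + w (Function.update j d (j d + 1))
        - 2 * w j) := by
  classical
  have hcond : ∀ (d : Fin D) (k : Fin D → Fin N),
      (∏ e ∈ Finset.univ.erase d, if j e = k e then (1:ℝ) else 0)
        = if Function.update j d (k d) = k then 1 else 0 := by
    intro d k
    by_cases H : Function.update j d (k d) = k
    · rw [if_pos H, Finset.prod_eq_one]
      intro e he
      rw [if_pos]
      have := congrFun H e
      rwa [Function.update_of_ne (Finset.mem_erase.mp he).1] at this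
    · rw [if_neg H]
      have hex : ∃ e, Function.update j d (k d) e ≠ k e := by
        by_contra hc; push_neg at hc; exact H (funext hc)
      obtain ⟨e, he⟩ := hex
      have hed : e ≠ d := by rintro rfl; exact he (Function.update_self _ _ _)
      refine Finset.prod_eq_zero (Finset.mem_erase.mpr ⟨hed, Finset.mem_univ _⟩) ?_
      rw [if_neg]
      intro hje; apply he; rw [Function.update_of_ne hed]; exact hje
  unfold Matrix.mulVec dotProduct LDR
  simp only [Matrix.of_apply]
  simp only [Finset.sum_mul]
  rw [Finset.sum_comm]
  apply Finset.sum_congr rfl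
  intro d _
  simp only [hcond, ite_mul, mul_ite, mul_one, mul_zero, zero_mul]
  rw [collapse d j (fun m => L1R N h (j d) m) w]
  rw [row_sum N h (j d) (fun m => w (Function.update j d m))]
  simp only [Function.update_eq_self]

theorem stmt_12 (n : ℕ) (hn : 1 ≤ n) (N : ℕ) (hN : N = 2 ^ n) [NeZero N]
    (h : ℝ) (hh : h = 1 / N) (D : ℕ) (hD : 1 ≤ D)
    (v : (Fin D → ℝ) → ℝ) (hv : ContDiff ℝ 4 v)
    (hper : ∀ (x : Fin D → ℝ) (d : Fin D), v (x + Pi.single d 1) = v x)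
    (M : Fin D → ℝ) (hM : ∀ d, 0 ≤ M d)
    (hbound : ∀ (d : Fin D) (x : Fin D → ℝ),
      |iteratedDeriv 4 (fun t : ℝ => v (x + t • (Pi.single d 1 : Fin D → ℝ))) 0| ≤ M d)
    (vg : (Fin D → Fin N) → ℝ) (hvg : ∀ j : Fin D → Fin N, vg j = v (fun d => (j d : ℝ) * h)) :
    ∀ j : Fin D → Fin N,
      |(LDR N D h).mulVec vg j
        - ∑ d : Fin D,
            iteratedDeriv 2 (fun t : ℝ => v ((fun e => (j e : ℝ) * h) + t • (Pi.single d 1 : Fin D → ℝ))) 0|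
      ≤ h ^ 2 / 12 * ∑ d : Fin D, M d := by
  have hN2 : 2 ≤ N := by
    rw [hN]
    calc 2 = 2 ^ 1 := (pow_one 2).symm
    _ ≤ 2 ^ n := Nat.pow_le_pow_right (by norm_num) hn
  have hN0 : 0 < N := by omega
  have hNr : (0:ℝ) < (N:ℝ) := by exact_mod_cast hN0
  have hh0 : 0 < h := by rw [hh]; positivity
  have hNh : (N:ℝ) * h = 1 := by rw [hh]; field_simp
  intro j
  set x : Fin D → ℝ := fun e => (j e : ℝ) * h with hx
  set g : Fin D → ℝ → ℝ := fun d t => v (x + t • (Pi.single d 1 : Fin D → ℝ)) with hgdef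
  have hglam : ∀ d : Fin D, (fun t : ℝ => v (x + t • (Pi.single d 1 : Fin D → ℝ))) = g d := fun d => rfl
  have hgc : ∀ d, ContDiff ℝ 4 (g d) := by
    intro d
    exact hv.comp (contDiff_const.add (contDiff_id.smul contDiff_const))
  have hgper : ∀ d t, g d (t + 1) = g d t := by
    intro d t
    have harg : x + (t + 1) • (Pi.single d 1 : Fin D → ℝ) = (x + t • (Pi.single d 1 : Fin D → ℝ)) + (Pi.single d 1 : Fin D → ℝ) := by
      rw [add_smul, one_smul, add_assoc]
    simp only [hgdef]
    rw [harg, hper]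
  have hgM : ∀ d t, |iteratedDeriv 4 (g d) t| ≤ M d := by
    intro d t
    have hb := hbound d (x + t • (Pi.single d 1 : Fin D → ℝ))
    have harg : (fun s : ℝ => v ((x + t • (Pi.single d 1 : Fin D → ℝ)) + s • (Pi.single d 1 : Fin D → ℝ)))
        = fun s => g d (t + s) := by
      funext s
      simp only [hgdef]
      rw [add_assoc, ← add_smul]
    rw [harg, iteratedDeriv_comp_const_add] at hb
    simpa using hb
  have hupdate : ∀ (d : Fin D) (m : Fin N),
      vg (Function.update j d m) = g d (((m:ℝ) - (j d : ℝ)) * h) := by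
    intro d m
    rw [hvg]
    simp only [hgdef]
    congr 1
    funext e
    by_cases he : e = d
    · subst he
      simp only [Function.update_self, Pi.add_apply, Pi.smul_apply, Pi.single_eq_same,
        smul_eq_mul, mul_one, hx]
      ring
    · simp only [Function.update_of_ne he, Pi.add_apply, Pi.smul_apply,
        Pi.single_eq_of_ne he, smul_eq_mul, mul_zero, add_zero, hx]
  have hv0 : ∀ d : Fin D, vg j = g d 0 := by
    intro d
    rw [hvg]
    simp only [hgdef, zero_smul, add_zero, hx]
  have hplus : ∀ d, vg (Function.update j d (j d + 1)) = g d h := by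
    intro d
    rw [hupdate d (j d + 1)]
    have h1N : 1 % N = 1 := Nat.mod_eq_of_lt (by omega)
    have hval : ((j d + 1 : Fin N) : ℕ) = ((j d : ℕ) + 1) % N := by
      simp only [Fin.add_def, Fin.val_one', h1N]
    by_cases hc : (j d : ℕ) + 1 < N
    · have hv' : ((j d + 1 : Fin N) : ℕ) = (j d : ℕ) + 1 := by
        rw [hval, Nat.mod_eq_of_lt hc]
      have : (((j d + 1 : Fin N) : ℝ) - ((j d : ℕ) : ℝ)) * h = h := by
        have : (((j d + 1 : Fin N) : ℕ) : ℝ) = ((j d : ℕ) : ℝ) + 1 := by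
          rw [hv']; push_cast; ring
        rw [this]; ring
      rw [this]
    · have hjd : (j d : ℕ) = N - 1 := by have := (j d).isLt; omega
      have hv' : ((j d + 1 : Fin N) : ℕ) = 0 := by
        rw [hval, hjd]
        have : N - 1 + 1 = N := by omega
        rw [this, Nat.mod_self]
      have harg : (((j d + 1 : Fin N) : ℝ) - ((j d : ℕ) : ℝ)) * h = h - 1 := by
        have h1 : (((j d + 1 : Fin N) : ℕ) : ℝ) = 0 := by rw [hv']; norm_num
        have h2 : ((j d : ℕ) : ℝ) = (N:ℝ) - 1 := by
          rw [hjd]; push_cast [Nat.cast_sub (by omega : 1 ≤ N)]; ring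
        rw [h1, h2]
        nlinarith [hNh]
      rw [harg]
      have := hgper d (h - 1)
      rw [sub_add_cancel] at this
      exact this.symm
  have hminus : ∀ d, vg (Function.update j d (j d - 1)) = g d (-h) := by
    intro d
    rw [hupdate d (j d - 1)]
    have h1N : 1 % N = 1 := Nat.mod_eq_of_lt (by omega)
    have hval : ((j d - 1 : Fin N) : ℕ) = ((j d : ℕ) + (N - 1)) % N := by
      simp only [Fin.sub_def, Fin.val_one', h1N]
      rw [Nat.add_comm]
    by_cases hc : 1 ≤ (j d : ℕ)
    · have hv' : ((j d - 1 : Fin N) : ℕ) = (j d : ℕ) - 1 := by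
        rw [hval]
        have hlt := (j d).isLt
        have : (j d : ℕ) + (N - 1) = ((j d : ℕ) - 1) + N := by omega
        rw [this, Nat.add_mod_right, Nat.mod_eq_of_lt (by omega)]
      have harg : (((j d - 1 : Fin N) : ℝ) - ((j d : ℕ) : ℝ)) * h = -h := by
        have h1 : (((j d - 1 : Fin N) : ℕ) : ℝ) = ((j d : ℕ) : ℝ) - 1 := by
          rw [hv']; push_cast [Nat.cast_sub hc]; ring
        rw [h1]; ring
      rw [harg]
    · have hjd : (j d : ℕ) = 0 := by omega
      have hv' : ((j d - 1 : Fin N) : ℕ) = N - 1 := by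
        rw [hval, hjd, Nat.zero_add, Nat.mod_eq_of_lt (by omega)]
      have harg : (((j d - 1 : Fin N) : ℝ) - ((j d : ℕ) : ℝ)) * h = -h + 1 := by
        have h1 : (((j d - 1 : Fin N) : ℕ) : ℝ) = (N:ℝ) - 1 := by
          rw [hv']; push_cast [Nat.cast_sub (by omega : 1 ≤ N)]; ring
        have h2 : ((j d : ℕ) : ℝ) = 0 := by rw [hjd]; norm_num
        rw [h1, h2]
        nlinarith [hNh]
      rw [harg]
      exact hgper d (-h)
  rw [mulVec_LDR]
  have hsummand : ∀ d : Fin D,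
      (1 / h ^ 2) * (vg (Function.update j d (j d - 1)) + vg (Function.update j d (j d + 1))
        - 2 * vg j) = (g d h + g d (-h) - 2 * g d 0) / h ^ 2 := by
    intro d
    rw [hminus d, hplus d, hv0 d]
    ring
  simp only [hglam, hsummand]
  rw [← Finset.sum_sub_distrib]
  calc |∑ d : Fin D, ((g d h + g d (-h) - 2 * g d 0) / h ^ 2 - iteratedDeriv 2 (g d) 0)|
      ≤ ∑ d : Fin D, |(g d h + g d (-h) - 2 * g d 0) / h ^ 2 - iteratedDeriv 2 (g d) 0| :=
        Finset.abs_sum_le_sum_abs _ _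
    _ ≤ ∑ d : Fin D, h ^ 2 * M d / 12 :=
        Finset.sum_le_sum fun d _ => central (hgc d) (hgM d) hh0
    _ = h ^ 2 / 12 * ∑ d : Fin D, M d := by
        rw [Finset.mul_sum]
        exact Finset.sum_congr rfl fun d _ => by ring
end
end
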